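/- Let a, b, n be positive integers with b ≥ a and n ≥ 3b(b+1)/a + 3b + 7. Then the spectral radius of K_{4b} ∇ (K₂ ∪ K_{n−4b−2}) is strictly less than n − 2. -/

import Mathlib

open scoped Classical

/-- The adjacency matrix of a simple graph is Hermitian over `ℝ`. -/
theorem adjMatrix_isHermitian {n : ℕ} (G : SimpleGraph (Fin n)) :
    (G.adjMatrix ℝ).IsHermitian := by
  unfold Matrix.IsHermitian
  rw [Matrix.conjTranspose_eq_transpose_of_trivial]
  exact G.isSymm_adjMatrix

/-- The spectral radius of a graph: the largest eigenvalue of its adjacency matrix. -/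
noncomputable def specRad {n : ℕ} (G : SimpleGraph (Fin n)) : ℝ :=
  ⨆ i, (adjMatrix_isHermitian G).eigenvalues i
/-- The graph `K_c ∇ (K₂ ∪ K_{n-c-2})` on `Fin n`: the first `c` vertices form a
dominating clique, the next two vertices form a `K₂`, and the remaining vertices
form a clique `K_{n-c-2}`. -/
def joinGraph (n c : ℕ) : SimpleGraph (Fin n) where
  Adj u v := u ≠ v ∧ ((u : ℕ) < c ∨ (v : ℕ) < c ∨ (((u : ℕ) < c + 2) ↔ ((v : ℕ) < c + 2)))
  symm := by
    constructor
    rintro u v ⟨h1, h2⟩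
    exact ⟨h1.symm, by tauto⟩
  loopless := ⟨fun u h => h.1 rfl⟩

/-- The graph `H_{n,b} = K_{b-1} ∇ (K₁ ∪ K_{n-b})` on `Fin n`: the complete graph on the
vertices `1, …, n-1` together with the vertex `0` joined precisely to `1, …, b-1`. -/
def Hgraph (n b : ℕ) : SimpleGraph (Fin n) where
  Adj u v := u ≠ v ∧ ¬((u : ℕ) = 0 ∧ b ≤ (v : ℕ)) ∧ ¬((v : ℕ) = 0 ∧ b ≤ (u : ℕ))
  symm := by
    constructor
    rintro u v ⟨h1, h2, h3⟩
    exact ⟨h1.symm, h3, h2⟩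
  loopless := ⟨fun u h => h.1 rfl⟩

/-!
Let `C`, `P`, `R` be the vertex sets of `K_c`, `K₂` and `K_m`, `m = n - c - 2`, and let `S_X` be
the sum of `x` over `X`. The adjacency matrix is `J - I` minus the `P`–`R` edges, so
`xᵀ A x = (S_C + S_P + S_R)² - 2 S_P S_R - ‖x‖²`. Cauchy–Schwarz on each block,
`S_X² ≤ |X| ‖x|_X‖²`, reduces `xᵀ A x < (n - 2) ‖x‖²` to the positivity of a quadratic form
in `(S_C, S_P, S_R)`; completing the squares in `S_P` and `S_R` shows that it is positive definite
as soon as `(c + m)² > c² + (c + 1)²`. For `c = 4b` the hypothesis gives `m ≥ 2b + 8`.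
-/

open Finset Matrix

lemma Matrix.IsHermitian.eigenvalues_lt_of_dotProduct_mulVec_lt {ι : Type*} [Fintype ι]
    [DecidableEq ι] {A : Matrix ι ι ℝ} (hA : A.IsHermitian) {r : ℝ}
    (h : ∀ x ≠ 0, x ⬝ᵥ A *ᵥ x < r * (x ⬝ᵥ x)) (i : ι) : hA.eigenvalues i < r := by
  set v := hA.eigenvectorBasis i
  have hv : ⇑v ⬝ᵥ ⇑v = 1 := show inner ℝ v v = 1 by
    rw [real_inner_self_eq_norm_sq, hA.eigenvectorBasis.orthonormal.1 i, one_pow]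
  have hv0 : (⇑v : ι → ℝ) ≠ 0 := fun h0 => by simp [h0] at hv
  simpa [hA.eigenvalues_eq, hv] using h v hv0

lemma specRad_lt_of_dotProduct_mulVec_lt {n : ℕ} [NeZero n] (G : SimpleGraph (Fin n)) {r : ℝ}
    (h : ∀ x ≠ 0, x ⬝ᵥ G.adjMatrix ℝ *ᵥ x < r * (x ⬝ᵥ x)) : specRad G < r := by
  obtain ⟨i, hi⟩ := exists_eq_ciSup_of_finite (f := (adjMatrix_isHermitian G).eigenvalues)
  rw [specRad, ← hi]
  exact (adjMatrix_isHermitian G).eigenvalues_lt_of_dotProduct_mulVec_lt h i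

lemma Fin.card_filter_val_le_card {n : ℕ} (p : ℕ → Prop) [DecidablePred p] {s : Finset ℕ}
    (hs : ∀ i < n, p i → i ∈ s) : #{u : Fin n | p u.val} ≤ #s :=
  card_le_card_of_injOn Fin.val (fun u hu => hs u u.isLt (mem_filter.1 hu).2)
    Fin.val_injective.injOn

lemma sq_sum_le_mul_sum_sq {ι : Type*} {s : Finset ι} {k : ℝ} (hs : (#s : ℝ) ≤ k)
    (f : ι → ℝ) :
    (∑ i ∈ s, f i) ^ 2 ≤ k * ∑ i ∈ s, f i ^ 2 :=
  sq_sum_le_card_mul_sum_sq.trans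
    (mul_le_mul_of_nonneg_right hs (sum_nonneg fun _ _ => sq_nonneg _))

lemma Fin.card_filter_val_lt_le (n c : ℕ) : (#{u : Fin n | u.val < c} : ℝ) ≤ c := by
  rw [Fin.card_filter_val_lt]
  exact_mod_cast min_le_right n c

lemma Fin.card_filter_val_Ico_le (n c : ℕ) :
    (#{u : Fin n | c ≤ u.val ∧ u.val < c + 2} : ℝ) ≤ 2 := by
  have := Fin.card_filter_val_le_card (n := n) (fun i => c ≤ i ∧ i < c + 2) (s := Ico c (c + 2))
    (by simp)
  rw [Nat.card_Ico, add_tsub_cancel_left] at this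
  exact_mod_cast this

lemma Fin.card_filter_le_val_le {n c : ℕ} (h : c + 2 ≤ n) :
    (#{u : Fin n | c + 2 ≤ u.val} : ℝ) ≤ n - c - 2 := by
  have := Fin.card_filter_val_le_card (n := n) (fun i => c + 2 ≤ i) (s := Ico (c + 2) n)
    (by simp only [mem_Ico]; omega)
  rw [Nat.card_Ico] at this
  have := (Nat.cast_le (α := ℝ)).2 this
  push_cast [h] at this
  linarith

lemma two_mul_le_mul_sq_add_sq_div {β : ℝ} (hβ : 0 < β) (y z : ℝ) :
    2 * y * z ≤ β * z ^ 2 + y ^ 2 / β := by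
  have : 0 ≤ (β * z - y) ^ 2 / β := by positivity
  have e : (β * z - y) ^ 2 / β = β * z ^ 2 + y ^ 2 / β - 2 * y * z := by
    field_simp; ring
  linarith

lemma sq_add_add_sub_two_mul_lt_of_sq_le_mul {c m y z w p q r : ℝ} (hc : 0 ≤ c) (hm : 0 < m)
    (hcm : c ^ 2 + (c + 1) ^ 2 < (c + m) ^ 2) (hp : 0 ≤ p)
    (hpqr : 0 < p + q + r) (hy : y ^ 2 ≤ c * p) (hz : z ^ 2 ≤ 2 * q) (hw : w ^ 2 ≤ m * r) :
    (y + z + w) ^ 2 - 2 * z * w < (c + m + 1) * (p + q + r) := by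
  have hcm1 : 0 < c + m - 1 := by nlinarith
  rcases eq_or_ne y 0 with rfl | hy0
  · have hq : 0 ≤ q := by nlinarith [sq_nonneg z]
    have hr : 0 ≤ r := by nlinarith [sq_nonneg w]
    nlinarith [mul_nonneg hc hp, mul_nonneg hc hq, mul_nonneg hc hr, mul_nonneg hm.le hp,
      mul_nonneg hcm1.le hq]
  have hy2 : 0 < y ^ 2 := by positivity
  have hc0 : 0 < c := hc.lt_of_ne (by rintro rfl; linarith)
  set β := (c + m - 1) / 2 with hβ
  set γ := (c + 1) / m with hγ
  -- Completing the squares in `z` and `w` leaves `y ^ 2 * ((m + 1) / c - 1 / β - 1 / γ)`.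
  have hgap : 1 / β + 1 / γ < (m + 1) / c := by
    rw [hβ, hγ, ← sub_pos]
    have e : (m + 1) / c - (1 / ((c + m - 1) / 2) + 1 / ((c + 1) / m)) =
        ((c + m) ^ 2 - c ^ 2 - (c + 1) ^ 2) / (c * (c + 1) * (c + m - 1)) := by
      field_simp
      ring
    rw [e]
    apply div_pos <;> [linarith; positivity]
  have hCp : (1 + (m + 1) / c) * y ^ 2 ≤ (c + m + 1) * p := by
    calc (1 + (m + 1) / c) * y ^ 2 = (c + m + 1) * (y ^ 2 / c) := by field_simp; ring
      _ ≤ (c + m + 1) * p := by gcongr; rwa [div_le_iff₀' hc0]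
  have hPq : (1 + β) * z ^ 2 ≤ (c + m + 1) * q := by
    calc (1 + β) * z ^ 2 = (c + m + 1) * (z ^ 2 / 2) := by rw [hβ]; ring
      _ ≤ (c + m + 1) * q := by gcongr; linarith
  have hRr : (1 + γ) * w ^ 2 ≤ (c + m + 1) * r := by
    calc (1 + γ) * w ^ 2 = (c + m + 1) * (w ^ 2 / m) := by rw [hγ]; field_simp; ring
      _ ≤ (c + m + 1) * r := by gcongr; rwa [div_le_iff₀' hm]
  have hyz := two_mul_le_mul_sq_add_sq_div (by positivity : 0 < β) y z
  have hyw := two_mul_le_mul_sq_add_sq_div (by positivity : 0 < γ) y w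
  have hgap' : y ^ 2 / β + y ^ 2 / γ < (m + 1) / c * y ^ 2 := by
    have := mul_lt_mul_of_pos_right hgap hy2
    rw [add_mul] at this
    field_simp at this ⊢
    linarith
  linarith

section joinGraph

variable {n c : ℕ}

lemma joinGraph_adj {u v : Fin n} :
    (joinGraph n c).Adj u v ↔
      u ≠ v ∧ ((u : ℕ) < c ∨ (v : ℕ) < c ∨ ((u : ℕ) < c + 2 ↔ (v : ℕ) < c + 2)) := Iff.rfl

lemma joinGraph_adjMatrix_mul (x : Fin n → ℝ) (u v : Fin n) :
    (joinGraph n c).adjMatrix ℝ u v * (x u * x v) =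
      x u * x v - (if u = v then x u * x v else 0) -
        ((if c ≤ u.val ∧ u.val < c + 2 then x u else 0) *
            (if c + 2 ≤ v.val then x v else 0) +
          (if c + 2 ≤ u.val then x u else 0) *
            (if c ≤ v.val ∧ v.val < c + 2 then x v else 0)) := by
  rcases u with ⟨i, hi⟩
  rcases v with ⟨j, hj⟩
  simp only [SimpleGraph.adjMatrix_apply, joinGraph_adj, ne_eq, Fin.mk.injEq]
  split_ifs <;> first | (exfalso; omega) | ring

lemma dotProduct_joinGraph_mulVec (x : Fin n → ℝ) :
    x ⬝ᵥ (joinGraph n c).adjMatrix ℝ *ᵥ x =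
      (∑ u, x u) ^ 2 - ∑ u, x u ^ 2 -
        2 * ((∑ u : Fin n with c ≤ u.val ∧ u.val < c + 2, x u) *
          ∑ u : Fin n with c + 2 ≤ u.val, x u) := by
  have expand : x ⬝ᵥ (joinGraph n c).adjMatrix ℝ *ᵥ x =
      ∑ u, ∑ v, (joinGraph n c).adjMatrix ℝ u v * (x u * x v) := by
    simp only [dotProduct, mulVec, mul_sum]
    exact sum_congr rfl fun u _ => sum_congr rfl fun v _ => by ring
  simp only [expand, joinGraph_adjMatrix_mul, sum_sub_distrib, sum_add_distrib, ← sum_mul_sum,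
    sum_ite_eq, mem_univ, if_true, sum_filter, ← sq]
  ring

lemma sum_eq_sum_joinGraph_blocks (f : Fin n → ℝ) :
    ∑ u, f u = (∑ u : Fin n with u.val < c, f u) +
      (∑ u : Fin n with c ≤ u.val ∧ u.val < c + 2, f u) +
        ∑ u : Fin n with c + 2 ≤ u.val, f u := by
  simp only [sum_filter, ← sum_add_distrib]
  refine sum_congr rfl fun u _ => ?_
  split_ifs <;> first | (exfalso; omega) | ring

end joinGraph

theorem specRad_joinGraph_lt {n c : ℕ} (h : c ^ 2 + (c + 1) ^ 2 < (n - 2) ^ 2) :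
    specRad (joinGraph n c) < n - 2 := by
  have hcn : c + 2 < n := by
    by_contra! hle
    have : (n - 2) ^ 2 ≤ c ^ 2 := Nat.pow_le_pow_left (by omega) 2
    linarith [Nat.zero_le ((c + 1) ^ 2)]
  have : NeZero n := ⟨by omega⟩
  refine specRad_lt_of_dotProduct_mulVec_lt _ fun x hx => ?_
  have hm : (0 : ℝ) < n - c - 2 := by
    have : ((c + 2 : ℕ) : ℝ) < n := by exact_mod_cast hcn
    push_cast at this
    linarith
  have hcm : (c : ℝ) ^ 2 + (c + 1) ^ 2 < (c + (n - c - 2)) ^ 2 := by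
    have : ((c ^ 2 + (c + 1) ^ 2 : ℕ) : ℝ) < ((n - 2 : ℕ) : ℝ) ^ 2 := by exact_mod_cast h
    push_cast [Nat.cast_sub (by omega : 2 ≤ n)] at this
    convert this using 2
    ring
  have hxx : x ⬝ᵥ x = ∑ u, x u ^ 2 := by simp only [dotProduct, sq]
  have hpos : 0 < ∑ u, x u ^ 2 := by
    obtain ⟨u, hu⟩ := Function.ne_iff.1 hx
    exact sum_pos' (fun _ _ => sq_nonneg _) ⟨u, mem_univ u, sq_pos_of_ne_zero hu⟩
  rw [dotProduct_joinGraph_mulVec, hxx, sum_eq_sum_joinGraph_blocks (c := c) x]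
  rw [sum_eq_sum_joinGraph_blocks (c := c) (x · ^ 2)] at hpos ⊢
  have := sq_add_add_sub_two_mul_lt_of_sq_le_mul (Nat.cast_nonneg c) hm hcm
    (sum_nonneg fun _ _ => sq_nonneg _) hpos
    (sq_sum_le_mul_sum_sq (Fin.card_filter_val_lt_le n c) x)
    (sq_sum_le_mul_sum_sq (Fin.card_filter_val_Ico_le n c) x)
    (sq_sum_le_mul_sum_sq (Fin.card_filter_le_val_le hcn.le) x)
  linarith

theorem stmt4 (a b n : ℕ) (ha : 0 < a) (hab : a ≤ b)
    (hn : (3 * b * (b + 1) : ℝ) / a + 3 * b + 7 ≤ n) :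
    specRad (joinGraph n (4 * b)) < (n : ℝ) - 2 := by
  have hdiv : (3 * (b + 1) : ℝ) ≤ 3 * b * (b + 1) / a := by
    have hab' : (a : ℝ) ≤ b := by exact_mod_cast hab
    rw [le_div_iff₀ (by exact_mod_cast ha)]
    nlinarith
  have hn' : 6 * b + 8 ≤ n - 2 := by
    have : ((6 * b + 10 : ℕ) : ℝ) ≤ n := by push_cast; linarith
    have : 6 * b + 10 ≤ n := by exact_mod_cast this
    omega
  apply specRad_joinGraph_lt
  nlinarith [Nat.pow_le_pow_left hn' 2]
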